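/- arXiv:1701.05217 — 2 statements merged into one kernel-verified Lean document; each statement's English description precedes it below -/
import Mathlib

section
/- Let 1 ≤ p ≤ ∞ and let g_1, …, g_L ∈ L¹(ℝ^d). For inputs f_1, …, f_L and h_1, …, h_L in L²(ℝ^d), define F = (∑_{l=1}^L |f_l ∗ g_l|^p)^{1/p} and H = (∑_{l=1}^L |h_l ∗ g_l|^p)^{1/p} (pointwise). Then ‖F − H‖_2² ≤ max(1, L^{2/p − 1}) · ∑_{l=1}^L ‖(f_l − h_l) ∗ g_l‖_2². -/
/-! At almost every `x` all the convolutions exist (an `L²` function convolved with an `L¹`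
function does), so they are linear in the input there, and the reverse triangle inequality in
`ℓ^p(Fin L)` gives `|F x - H x| ≤ ‖((f_l - h_l) ∗ g_l)(x)‖_p`. Comparing `ℓ^p` with `ℓ^2` on `L`
coordinates (monotonicity of the `ℓ^p` norms when `p ≥ 2`, Hölder when `p ≤ 2`) bounds the
square of the right-hand side by `max 1 (L^{2/p - 1}) ∑_l |((f_l - h_l) ∗ g_l)(x)|²`; integrating
this pointwise bound gives the claim. -/

open MeasureTheory Real ENNReal
open scoped FourierTransform Convolution

noncomputable section

/-- Convolution of two complex-valued functions on `ℝ^d` w.r.t. Lebesgue measure. -/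
def conv {d : ℕ} (f g : EuclideanSpace ℝ (Fin d) → ℂ) :
    EuclideanSpace ℝ (Fin d) → ℂ :=
  MeasureTheory.convolution f g (ContinuousLinearMap.mul ℂ ℂ) volume

open scoped NNReal

theorem NNReal.sum_rpow_le_rpow_sum {ι : Type*} (s : Finset ι) (x : ι → ℝ≥0) {r : ℝ}
    (hr : 1 ≤ r) : ∑ i ∈ s, x i ^ r ≤ (∑ i ∈ s, x i) ^ r := by
  have hsplit : ∀ y : ℝ≥0, y ^ r = y ^ (r - 1) * y := fun y => by
    rw [← NNReal.rpow_add_one' (by linarith), sub_add_cancel]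
  calc ∑ i ∈ s, x i ^ r ≤ ∑ i ∈ s, (∑ j ∈ s, x j) ^ (r - 1) * x i := by
        gcongr with i hi
        rw [hsplit]
        gcongr
        exact Finset.single_le_sum (fun j _ => zero_le) hi
    _ = (∑ j ∈ s, x j) ^ r := by rw [← Finset.mul_sum, ← hsplit]

namespace PiLp

variable {ι : Type*} [Fintype ι] {β : ι → Type*} [∀ i, SeminormedAddCommGroup (β i)]

theorem nnnorm_toLp_le_nnnorm_toLp_of_le {p q : ℝ≥0∞} [Fact (1 ≤ p)] [Fact (1 ≤ q)]
    (hpq : p ≤ q) (x : ∀ i, β i) : ‖WithLp.toLp q x‖₊ ≤ ‖WithLp.toLp p x‖₊ := by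
  rcases eq_or_ne q ∞ with rfl | hq
  · rw [nnnorm_eq_ciSup]
    exact ciSup_le' fun i => nnnorm_apply_le (WithLp.toLp p x) i
  have hp : p ≠ ∞ := ne_top_of_le_ne_top hq hpq
  have hp0 : 0 < p.toReal := ENNReal.toReal_pos (one_pos.trans_le Fact.out).ne' hp
  have hq0 : 0 < q.toReal := hp0.trans_le (ENNReal.toReal_mono hq hpq)
  have hr : 1 ≤ q.toReal / p.toReal :=
    (one_le_div hp0).mpr (ENNReal.toReal_mono hq hpq)
  rw [nnnorm_eq_sum hq, nnnorm_eq_sum hp]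
  calc (∑ i, ‖x i‖₊ ^ q.toReal) ^ (1 / q.toReal)
      = (∑ i, (‖x i‖₊ ^ p.toReal) ^ (q.toReal / p.toReal)) ^ (1 / q.toReal) := by
        simp only [← NNReal.rpow_mul, mul_div_cancel₀ _ hp0.ne']
    _ ≤ ((∑ i, ‖x i‖₊ ^ p.toReal) ^ (q.toReal / p.toReal)) ^ (1 / q.toReal) := by
        gcongr
        exact NNReal.sum_rpow_le_rpow_sum _ _ hr
    _ = (∑ i, ‖x i‖₊ ^ p.toReal) ^ (1 / p.toReal) := by
        rw [← NNReal.rpow_mul]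
        congr 1
        field_simp

theorem nnnorm_toLp_le_card_rpow_mul_nnnorm_toLp {p q : ℝ≥0∞} [Fact (1 ≤ p)] [Fact (1 ≤ q)]
    (hpq : p ≤ q) (hq : q ≠ ∞) (x : ∀ i, β i) :
    ‖WithLp.toLp p x‖₊ ≤
      (Fintype.card ι : ℝ≥0) ^ (1 / p.toReal - 1 / q.toReal) * ‖WithLp.toLp q x‖₊ := by
  have hp : p ≠ ∞ := ne_top_of_le_ne_top hq hpq
  have hp0 : 0 < p.toReal := ENNReal.toReal_pos (one_pos.trans_le Fact.out).ne' hp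
  have hq0 : 0 < q.toReal := hp0.trans_le (ENNReal.toReal_mono hq hpq)
  have hr : 1 ≤ q.toReal / p.toReal :=
    (one_le_div hp0).mpr (ENNReal.toReal_mono hq hpq)
  have hHolder := NNReal.rpow_sum_le_const_mul_sum_rpow Finset.univ
    (fun i => ‖x i‖₊ ^ p.toReal) hr
  simp only [← NNReal.rpow_mul, mul_div_cancel₀ _ hp0.ne', Finset.card_univ] at hHolder
  rw [nnnorm_eq_sum hq, nnnorm_eq_sum hp]
  calc (∑ i, ‖x i‖₊ ^ p.toReal) ^ (1 / p.toReal)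
      = ((∑ i, ‖x i‖₊ ^ p.toReal) ^ (q.toReal / p.toReal)) ^ (1 / q.toReal) := by
        rw [← NNReal.rpow_mul]
        congr 1
        field_simp
    _ ≤ ((Fintype.card ι : ℝ≥0) ^ (q.toReal / p.toReal - 1) * ∑ i, ‖x i‖₊ ^ q.toReal) ^
          (1 / q.toReal) := by gcongr
    _ = _ := by
        rw [NNReal.mul_rpow, ← NNReal.rpow_mul]
        congr 2
        field_simp

theorem norm_toLp_sq_le_max_mul_sum_norm_sq {p : ℝ≥0∞} [Fact (1 ≤ p)] (x : ∀ i, β i) :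
    ‖WithLp.toLp p x‖ ^ 2 ≤
      max 1 ((Fintype.card ι : ℝ) ^ (2 / p.toReal - 1)) * ∑ i, ‖x i‖ ^ 2 := by
  have hL2 : ‖WithLp.toLp 2 x‖ ^ 2 = ∑ i, ‖x i‖ ^ 2 := norm_sq_eq_of_L2 β _
  rcases le_total p 2 with hp2 | hp2
  · have hHolder : ‖WithLp.toLp p x‖ ≤
        (Fintype.card ι : ℝ) ^ (1 / p.toReal - 1 / 2) * ‖WithLp.toLp 2 x‖ := by
      exact_mod_cast nnnorm_toLp_le_card_rpow_mul_nnnorm_toLp hp2 ofNat_ne_top x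
    calc ‖WithLp.toLp p x‖ ^ 2
        ≤ ((Fintype.card ι : ℝ) ^ (1 / p.toReal - 1 / 2) * ‖WithLp.toLp 2 x‖) ^ 2 := by
          gcongr
      _ = (Fintype.card ι : ℝ) ^ (2 / p.toReal - 1) * ∑ i, ‖x i‖ ^ 2 := by
          rw [mul_pow, hL2, ← Real.rpow_natCast, ← Real.rpow_mul (Nat.cast_nonneg _)]
          congr 2
          ring
      _ ≤ _ := by gcongr; exact le_max_right _ _
  · calc ‖WithLp.toLp p x‖ ^ 2 ≤ ‖WithLp.toLp 2 x‖ ^ 2 := by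
          gcongr
          exact_mod_cast nnnorm_toLp_le_nnnorm_toLp_of_le hp2 x
      _ = ∑ i, ‖x i‖ ^ 2 := hL2
      _ ≤ _ := le_mul_of_one_le_left (by positivity) (le_max_left _ _)

end PiLp

namespace MeasureTheory

section Convolution

variable {𝕜 G E E' F : Type*} [NontriviallyNormedField 𝕜]
  [NormedAddCommGroup E] [NormedAddCommGroup E'] [NormedAddCommGroup F]
  [NormedSpace 𝕜 E] [NormedSpace 𝕜 E'] [NormedSpace 𝕜 F]
  {L : E →L[𝕜] E' →L[𝕜] F} [AddGroup G] [MeasurableSpace G] {μ ν : Measure G}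
  {f f' : G → E} {g : G → E'}

theorem ConvolutionExistsAt.sub_distrib [NormedSpace ℝ F] {x : G}
    (hfg : ConvolutionExistsAt f g x L μ) (hfg' : ConvolutionExistsAt f' g x L μ) :
    ((f - f') ⋆[L, μ] g) x = (f ⋆[L, μ] g) x - (f' ⋆[L, μ] g) x := by
  simp only [convolution_def, L.map_sub₂, Pi.sub_apply, integral_sub hfg hfg']

variable [MeasurableAdd₂ G] [MeasurableNeg G] [SFinite μ] [μ.IsAddRightInvariant]

theorem AEStronglyMeasurable.convolution [NormedSpace ℝ F] [SFinite ν]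
    (hf : AEStronglyMeasurable f ν) (hg : AEStronglyMeasurable g μ) :
    AEStronglyMeasurable (f ⋆[L, ν] g) μ :=
  (hf.convolution_integrand L hg).integral_prod_right'

theorem MemLp.ae_convolution_exists [μ.IsAddLeftInvariant] [μ.IsNegInvariant]
    (hf : MemLp f 2 μ) (hg : Integrable g μ) :
    ∀ᵐ x ∂μ, ConvolutionExistsAt f g x L μ := by
  have hf2 : Integrable (fun t => ‖f t‖ ^ 2) μ := hf.integrable_norm_pow two_ne_zero
  filter_upwards [hf2.ae_convolution_exists (ContinuousLinearMap.mul ℝ ℝ) hg.norm] with x hx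
  refine ConvolutionExistsAt.of_norm L ?_ hf.aestronglyMeasurable hg.aestronglyMeasurable
  -- `a b ≤ (a² b + b) / 2` for `b ≥ 0`, with `a = ‖f t‖`, `b = ‖g (x - t)‖`
  refine ((hx.integrable.add (hg.comp_sub_left x).norm).div_const 2).mono'
    (hf.aestronglyMeasurable.norm.convolution_integrand_snd _ hg.aestronglyMeasurable.norm x)
    (ae_of_all _ fun t => ?_)
  have hg0 : 0 ≤ ‖g (x - t)‖ := norm_nonneg _
  simp only [ContinuousLinearMap.mul_apply', norm_mul, norm_norm, Pi.add_apply]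
  nlinarith [mul_nonneg hg0 (sq_nonneg (‖f t‖ - 1))]

end Convolution

variable {α ι E F : Type*} [MeasurableSpace α] {μ : Measure α} [Fintype ι]
  [NormedAddCommGroup E] [NormedAddCommGroup F]

theorem eLpNorm_two_sq_eq_lintegral (f : α → E) :
    eLpNorm f 2 μ ^ 2 = ∫⁻ x, ‖f x‖ₑ ^ 2 ∂μ := by
  simpa using eLpNorm_nnreal_pow_eq_lintegral (f := f) (μ := μ) (p := 2) two_ne_zero

theorem eLpNorm_two_sq_le_ofReal_mul_sum {u : α → E} {v : ι → α → F} {c : ℝ}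
    (hv : ∀ i, AEStronglyMeasurable (v i) μ)
    (h : ∀ᵐ x ∂μ, ‖u x‖ ^ 2 ≤ c * ∑ i, ‖v i x‖ ^ 2) :
    eLpNorm u 2 μ ^ 2 ≤ ENNReal.ofReal c * ∑ i, eLpNorm (v i) 2 μ ^ 2 := by
  simp only [eLpNorm_two_sq_eq_lintegral]
  rw [← lintegral_finsetSum' _ fun i _ => ((hv i).enorm.pow_const 2),
    ← lintegral_const_mul' _ _ ofReal_ne_top]
  refine lintegral_mono_ae (h.mono fun x hx => ?_)
  calc ‖u x‖ₑ ^ 2 = ENNReal.ofReal (‖u x‖ ^ 2) := by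
        rw [ofReal_pow (norm_nonneg _), ofReal_norm]
    _ ≤ ENNReal.ofReal (c * ∑ i, ‖v i x‖ ^ 2) := ofReal_le_ofReal hx
    _ = ENNReal.ofReal c * ∑ i, ‖v i x‖ₑ ^ 2 := by
        rw [ofReal_mul' (by positivity), ofReal_sum_of_nonneg (fun i _ => by positivity)]
        simp only [ofReal_pow (norm_nonneg _), ofReal_norm]

end MeasureTheory

/-- Lipschitz estimate for aggregation of filters by a pointwise p-norm (Lemma 3.1). -/
theorem stmt_2 (d L : ℕ) (p : ENNReal) [Fact (1 ≤ p)]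
    (g f h : Fin L → EuclideanSpace ℝ (Fin d) → ℂ)
    (hg : ∀ l, Integrable (g l)) (hf : ∀ l, MemLp (f l) 2 volume)
    (hh : ∀ l, MemLp (h l) 2 volume)
    (F H : EuclideanSpace ℝ (Fin d) → ℝ)
    (hF : F = fun x => ‖(WithLp.equiv p (Fin L → ℂ)).symm (fun l => conv (f l) (g l) x)‖)
    (hH : H = fun x => ‖(WithLp.equiv p (Fin L → ℂ)).symm (fun l => conv (h l) (g l) x)‖) :
    eLpNorm (F - H) 2 volume ^ 2 ≤
      ENNReal.ofReal (max 1 ((L : ℝ) ^ (2 / p.toReal - 1))) *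
        ∑ l, eLpNorm (conv (f l - h l) (g l)) 2 volume ^ 2 := by
  have hconv : ∀ᵐ x, ∀ l, ConvolutionExistsAt (f l) (g l) x (ContinuousLinearMap.mul ℂ ℂ) volume ∧
      ConvolutionExistsAt (h l) (g l) x (ContinuousLinearMap.mul ℂ ℂ) volume :=
    ae_all_iff.mpr fun l => ((hf l).ae_convolution_exists (hg l)).and
      ((hh l).ae_convolution_exists (hg l))
  refine eLpNorm_two_sq_le_ofReal_mul_sum (fun l =>
    ((hf l).sub (hh l)).aestronglyMeasurable.convolution (hg l).aestronglyMeasurable) ?_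
  filter_upwards [hconv] with x hx
  have hsub : ∀ l, conv (f l) (g l) x - conv (h l) (g l) x = conv (f l - h l) (g l) x :=
    fun l => ((hx l).1.sub_distrib (hx l).2).symm
  have hdiff : |F x - H x| ≤ ‖WithLp.toLp p (fun l => conv (f l - h l) (g l) x)‖ := by
    subst hF hH
    refine (abs_norm_sub_norm_le _ _).trans_eq ?_
    simp only [WithLp.equiv_symm_apply, ← WithLp.toLp_sub, Pi.sub_def, hsub]
  calc ‖(F - H) x‖ ^ 2 = |F x - H x| ^ 2 := by rw [Pi.sub_apply, Real.norm_eq_abs]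
    _ ≤ ‖WithLp.toLp p (fun l => conv (f l - h l) (g l) x)‖ ^ 2 := by gcongr
    _ ≤ _ := by
      simpa only [Fintype.card_fin] using
        PiLp.norm_toLp_sq_le_max_mul_sum_norm_sq (p := p) fun l => conv (f l - h l) (g l) x

end
end

section
/- Let φ and ψ be the Haar scaling function and Haar wavelet on ℝ: φ = χ_{[0,1)} and ψ = χ_{[0,1/2)} − χ_{[1/2,1)}, and let f_λ(x) = λf(λx). Then for all ω ∈ ℝ, |φ̂_{2^{−3}}(ω)|² + ∑_{j=−2}^{0} |ψ̂_{2^j}(ω)|² = sinc²(8ω) + sinc²(ω/2)sin²(πω/2) + sinc²(ω)sin²(πω) + sinc²(2ω)sin²(2πω), and this quantity is ≤ 1 for all ω. -/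
open MeasureTheory Real
open scoped FourierTransform

noncomputable section

/-- Normalized _root_.sinc: `_root_.sinc x = sin (π x) / (π x)` with `_root_.sinc 0 = 1`. -/
def sinc (x : ℝ) : ℝ := if x = 0 then 1 else Real.sin (π * x) / (π * x)

/-- Haar scaling function `χ_{[0,1)}` (ℂ-valued). -/
def haarPhi : ℝ → ℂ := fun x => if 0 ≤ x ∧ x < 1 then 1 else 0

/-- Haar wavelet `χ_{[0,1/2)} − χ_{[1/2,1)}` (ℂ-valued). -/
def haarPsi : ℝ → ℂ :=
  fun x => if 0 ≤ x ∧ x < 1 / 2 then 1 else if 1 / 2 ≤ x ∧ x < 1 then -1 else 0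

/-- Dilation `f_λ(x) = λ f(λ x)`. -/
def dil (lam : ℝ) (f : ℝ → ℂ) : ℝ → ℂ := fun x => (lam : ℂ) * f (lam * x)

lemma exp_smul_ind (a b ω v : ℝ) :
    Complex.exp (↑(-2 * π * v * ω) * Complex.I) • (if a ≤ v ∧ v < b then (1:ℂ) else 0)
      = Set.indicator (Set.Ico a b)
          (fun v : ℝ => Complex.exp ((((-2*π*ω : ℝ) : ℂ) * Complex.I) * v)) v := by
  by_cases h : a ≤ v ∧ v < b
  · rw [Set.indicator_apply, if_pos h, if_pos (Set.mem_Ico.mpr h), smul_eq_mul, mul_one]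
    congr 1
    push_cast
    ring
  · simp [Set.indicator_apply, Set.mem_Ico, h]

lemma integrable_exp_smul_ind (a b ω : ℝ) :
    Integrable (fun v : ℝ =>
      Complex.exp (↑(-2 * π * v * ω) * Complex.I) • (if a ≤ v ∧ v < b then (1:ℂ) else 0)) := by
  simp_rw [exp_smul_ind]
  rw [integrable_indicator_iff measurableSet_Ico]
  exact ((Complex.continuous_exp.comp (by fun_prop)).integrableOn_Icc).mono_set
    Set.Ico_subset_Icc_self

lemma ft_ind (a b ω : ℝ) (hab : a ≤ b) (hω : ω ≠ 0) :
    (∫ v : ℝ, Complex.exp (↑(-2 * π * v * ω) * Complex.I) • (if a ≤ v ∧ v < b then (1:ℂ) else 0))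
      = (Complex.exp ((((-2*π*ω : ℝ) : ℂ) * Complex.I) * b)
          - Complex.exp ((((-2*π*ω : ℝ) : ℂ) * Complex.I) * a)) / (((-2*π*ω : ℝ) : ℂ) * Complex.I) := by
  have hc : (((-2*π*ω : ℝ) : ℂ) * Complex.I) ≠ 0 := by
    apply mul_ne_zero _ Complex.I_ne_zero
    rw [Complex.ofReal_ne_zero]
    exact mul_ne_zero (mul_ne_zero (by norm_num) Real.pi_ne_zero) hω
  simp_rw [exp_smul_ind]
  rw [MeasureTheory.integral_indicator measurableSet_Ico,
      MeasureTheory.setIntegral_congr_set Ico_ae_eq_Ioc,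
      ← intervalIntegral.integral_of_le hab,
      integral_exp_mul_complex hc]

lemma ft_ind_zero (a b : ℝ) (hab : a ≤ b) :
    (∫ v : ℝ, Complex.exp (↑(-2 * π * v * (0:ℝ)) * Complex.I) • (if a ≤ v ∧ v < b then (1:ℂ) else 0))
      = ((b - a : ℝ) : ℂ) := by
  simp_rw [exp_smul_ind a b 0]
  rw [MeasureTheory.integral_indicator measurableSet_Ico,
      MeasureTheory.setIntegral_congr_set Ico_ae_eq_Ioc,
      ← intervalIntegral.integral_of_le hab]
  simp

lemma dil_phi_eq :
    dil ((2:ℝ)^(-3:ℤ)) haarPhi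
      = fun x => ((8:ℝ)⁻¹ : ℂ) • (if (0:ℝ) ≤ x ∧ x < 8 then (1:ℂ) else 0) := by
  funext x
  have h8 : ((2:ℝ)^(-3:ℤ)) = (8:ℝ)⁻¹ := by norm_num
  simp only [dil, haarPhi, h8, smul_eq_mul]
  have : (0 ≤ (8:ℝ)⁻¹ * x ∧ (8:ℝ)⁻¹ * x < 1) ↔ (0 ≤ x ∧ x < 8) := by
    constructor <;> rintro ⟨h1, h2⟩ <;> constructor <;> nlinarith
  rw [if_congr this rfl rfl]
  norm_num

lemma dil_psi_eq (lam m : ℝ) (hlam : 0 < lam) (hm : lam * m = 1/2) :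
    dil lam haarPsi
      = fun x => ((lam:ℝ) : ℂ) • ((if (0:ℝ) ≤ x ∧ x < m then (1:ℂ) else 0)
          - (if m ≤ x ∧ x < 2*m then (1:ℂ) else 0)) := by
  funext x
  have A : (0 ≤ lam * x) ↔ (0 ≤ x) := by
    constructor <;> intro h <;> nlinarith
  have B : (lam * x < 1/2) ↔ x < m := by rw [← hm]; exact mul_lt_mul_iff_right₀ hlam
  have C : (1/2 ≤ lam * x) ↔ m ≤ x := by rw [← hm]; exact mul_le_mul_iff_right₀ hlam
  have D : (lam * x < 1) ↔ x < 2*m := by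
    rw [show (1:ℝ) = lam * (2*m) by linarith]
    exact mul_lt_mul_iff_right₀ hlam
  simp only [dil, haarPsi, A, B, C, D, smul_eq_mul]
  congr 1
  by_cases h1 : 0 ≤ x ∧ x < m
  · have h2 : ¬(m ≤ x ∧ x < 2*m) := fun h => absurd h1.2 (not_lt.mpr h.1)
    simp [h1, h2]
  · by_cases h2 : m ≤ x ∧ x < 2*m
    · simp [h1, h2]
    · simp [h1, h2]

lemma ft_phi (ω : ℝ) (hω : ω ≠ 0) :
    𝓕 (dil ((2:ℝ)^(-3:ℤ)) haarPhi) ω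
      = ((8:ℝ)⁻¹ : ℂ) * ((Complex.exp ((((-2*π*ω : ℝ) : ℂ) * Complex.I) * ((8:ℝ):ℂ)) - 1)
          / (((-2*π*ω : ℝ) : ℂ) * Complex.I)) := by
  rw [dil_phi_eq, Real.fourier_real_eq_integral_exp_smul]
  have : ∀ v : ℝ, Complex.exp (↑(-2 * π * v * ω) * Complex.I) •
      (((8:ℝ)⁻¹ : ℂ) • (if (0:ℝ) ≤ v ∧ v < 8 then (1:ℂ) else 0))
      = ((8:ℝ)⁻¹ : ℂ) • (Complex.exp (↑(-2 * π * v * ω) * Complex.I)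
          • (if (0:ℝ) ≤ v ∧ v < 8 then (1:ℂ) else 0)) := fun v => smul_comm _ _ _
  simp_rw [this]
  rw [integral_smul, ft_ind 0 8 ω (by norm_num) hω]
  norm_num

lemma ft_psi (lam m ω : ℝ) (hlam : 0 < lam) (hm : lam * m = 1/2) (hω : ω ≠ 0) :
    𝓕 (dil lam haarPsi) ω
      = -((lam:ℝ) : ℂ) * (Complex.exp ((((-2*π*ω : ℝ) : ℂ) * Complex.I) * ((m:ℝ):ℂ)) - 1)^2
          / (((-2*π*ω : ℝ) : ℂ) * Complex.I) := by
  have hc : (((-2*π*ω : ℝ) : ℂ) * Complex.I) ≠ 0 := by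
    apply mul_ne_zero _ Complex.I_ne_zero
    rw [Complex.ofReal_ne_zero]
    exact mul_ne_zero (mul_ne_zero (by norm_num) Real.pi_ne_zero) hω
  have hmpos : 0 < m := by nlinarith
  rw [dil_psi_eq lam m hlam hm, Real.fourier_real_eq_integral_exp_smul]
  have : ∀ v : ℝ, Complex.exp (↑(-2 * π * v * ω) * Complex.I) •
      (((lam:ℝ) : ℂ) • ((if (0:ℝ) ≤ v ∧ v < m then (1:ℂ) else 0)
          - (if m ≤ v ∧ v < 2*m then (1:ℂ) else 0)))
      = ((lam:ℝ) : ℂ) • ((Complex.exp (↑(-2 * π * v * ω) * Complex.I)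
            • (if (0:ℝ) ≤ v ∧ v < m then (1:ℂ) else 0))
          - (Complex.exp (↑(-2 * π * v * ω) * Complex.I)
            • (if m ≤ v ∧ v < 2*m then (1:ℂ) else 0))) := by
    intro v
    simp only [smul_eq_mul]
    ring
  simp_rw [this]
  rw [integral_smul, integral_sub (integrable_exp_smul_ind 0 m ω) (integrable_exp_smul_ind m (2*m) ω),
      ft_ind 0 m ω hmpos.le hω, ft_ind m (2*m) ω (by linarith) hω]
  have h2m : (((2*m : ℝ)) : ℂ) = 2 * ((m:ℝ):ℂ) := by push_cast; ring
  rw [h2m]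
  have hexp : Complex.exp ((((-2*π*ω : ℝ) : ℂ) * Complex.I) * (2 * ((m:ℝ):ℂ)))
      = Complex.exp ((((-2*π*ω : ℝ) : ℂ) * Complex.I) * ((m:ℝ):ℂ))^2 := by
    rw [← Complex.exp_nat_mul]
    congr 1
    ring
  rw [hexp]
  field_simp
  simp only [Complex.ofReal_zero, mul_zero, Complex.exp_zero]
  have hII : Complex.I * Complex.I⁻¹ = 1 := mul_inv_cancel₀ Complex.I_ne_zero
  linear_combination (Complex.exp (((-(2 * π * ω) : ℝ) : ℂ) * Complex.I * (m : ℂ)) * (((-(2 * π * ω) : ℝ) : ℂ))⁻¹ * (lam : ℂ) * 2 - Complex.exp (((-(2 * π * ω) : ℝ) : ℂ) * Complex.I * (m : ℂ)) ^ 2 * (((-(2 * π * ω) : ℝ) : ℂ))⁻¹ * (lam : ℂ) - (((-(2 * π * ω) : ℝ) : ℂ))⁻¹ * (lam : ℂ)) * hII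

lemma norm_exp_sub_one_sq (t : ℝ) :
    ‖Complex.exp (((-(2*t) : ℝ) : ℂ) * Complex.I) - 1‖^2 = 4 * Real.sin t ^ 2 := by
  have h : Complex.exp (((-(2*t) : ℝ) : ℂ) * Complex.I) - 1
      = ((Real.cos (-(2*t)) - 1 : ℝ) : ℂ) + ((Real.sin (-(2*t)) : ℝ) : ℂ) * Complex.I := by
    rw [Complex.exp_mul_I, ← Complex.ofReal_cos, ← Complex.ofReal_sin]
    push_cast
    ring
  rw [h, Complex.sq_norm, Complex.normSq_add_mul_I]
  have h1 : Real.sin t ^ 2 = 1/2 - Real.cos (2*t) / 2 := by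
    have := Real.sin_sq_eq_half_sub t
    linarith
  have h2 : Real.sin (-(2*t)) = -Real.sin (2*t) := Real.sin_neg _
  have h3 : Real.cos (-(2*t)) = Real.cos (2*t) := Real.cos_neg _
  have h4 := Real.sin_sq_add_cos_sq (2*t)
  rw [h2, h3]
  nlinarith [h1, h4]

lemma norm_c_sq (ω : ℝ) : ‖(((-2*π*ω : ℝ) : ℂ) * Complex.I)‖^2 = (2*π*ω)^2 := by
  rw [norm_mul, Complex.norm_I, mul_one, Complex.norm_real, Real.norm_eq_abs, sq_abs]
  ring

lemma phi_norm (ω : ℝ) (hω : ω ≠ 0) :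
    ‖𝓕 (dil ((2:ℝ)^(-3:ℤ)) haarPhi) ω‖^2 = _root_.sinc (8*ω)^2 := by
  have h8 : (8:ℝ) * ω ≠ 0 := mul_ne_zero (by norm_num) hω
  rw [ft_phi ω hω]
  have harg : (((-2*π*ω : ℝ) : ℂ) * Complex.I) * ((8:ℝ):ℂ)
      = ((-(2*(π*(8*ω))) : ℝ) : ℂ) * Complex.I := by push_cast; ring
  rw [harg, norm_mul, norm_div, mul_pow, div_pow, norm_exp_sub_one_sq, norm_c_sq]
  have h8n : ‖((8:ℝ)⁻¹ : ℂ)‖ = (8:ℝ)⁻¹ := by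
    rw [norm_inv, Complex.norm_real, Real.norm_eq_abs, abs_of_pos] <;> norm_num
  rw [h8n, _root_.sinc, if_neg h8, div_pow]
  have hπ : (π:ℝ) ≠ 0 := Real.pi_ne_zero
  field_simp
  ring


lemma psi_norm (lam m ω : ℝ) (hlam : 0 < lam) (hm : lam * m = 1/2) (hω : ω ≠ 0) :
    ‖𝓕 (dil lam haarPsi) ω‖^2
      = lam^2 * (16 * Real.sin (π*ω*m)^4) / (2*π*ω)^2 := by
  rw [ft_psi lam m ω hlam hm hω]
  have harg : (((-2*π*ω : ℝ) : ℂ) * Complex.I) * ((m:ℝ):ℂ)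
      = ((-(2*(π*ω*m)) : ℝ) : ℂ) * Complex.I := by push_cast; ring
  rw [harg, norm_div, norm_mul, norm_neg, norm_pow, div_pow, mul_pow,
    norm_exp_sub_one_sq, norm_c_sq]
  have hl : ‖((lam:ℝ):ℂ)‖ = lam := by
    rw [Complex.norm_real, Real.norm_eq_abs, abs_of_pos hlam]
  rw [hl]
  ring

lemma psi_norm_1 (ω : ℝ) (hω : ω ≠ 0) :
    ‖𝓕 (dil ((2:ℝ)^(0:ℤ)) haarPsi) ω‖^2 = _root_.sinc (ω/2)^2 * Real.sin (π*ω/2)^2 := by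
  rw [show ((2:ℝ)^(0:ℤ)) = 1 by norm_num,
      psi_norm 1 (1/2) ω one_pos (by norm_num) hω]
  have h2 : (ω/2 : ℝ) ≠ 0 := div_ne_zero hω two_ne_zero
  rw [_root_.sinc, if_neg h2,
      show π*ω*(1/2) = π*(ω/2) by ring, show π*ω/2 = π*(ω/2) by ring]
  have hπ : (π:ℝ) ≠ 0 := Real.pi_ne_zero
  field_simp
  ring

lemma psi_norm_half (ω : ℝ) (hω : ω ≠ 0) :
    ‖𝓕 (dil ((2:ℝ)^(-1:ℤ)) haarPsi) ω‖^2 = _root_.sinc ω^2 * Real.sin (π*ω)^2 := by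
  rw [show ((2:ℝ)^(-1:ℤ)) = 1/2 by norm_num,
      psi_norm (1/2) 1 ω (by norm_num) (by norm_num) hω]
  rw [_root_.sinc, if_neg hω, show π*ω*1 = π*ω by ring]
  have hπ : (π:ℝ) ≠ 0 := Real.pi_ne_zero
  field_simp
  ring

lemma psi_norm_quarter (ω : ℝ) (hω : ω ≠ 0) :
    ‖𝓕 (dil ((2:ℝ)^(-2:ℤ)) haarPsi) ω‖^2 = _root_.sinc (2*ω)^2 * Real.sin (2*π*ω)^2 := by
  rw [show ((2:ℝ)^(-2:ℤ)) = 1/4 by norm_num,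
      psi_norm (1/4) 2 ω (by norm_num) (by norm_num) hω]
  have h2 : (2*ω : ℝ) ≠ 0 := mul_ne_zero two_ne_zero hω
  rw [_root_.sinc, if_neg h2,
      show π*ω*2 = π*(2*ω) by ring, show 2*π*ω = π*(2*ω) by ring]
  have hπ : (π:ℝ) ≠ 0 := Real.pi_ne_zero
  field_simp
  ring

lemma phi_norm_zero : ‖𝓕 (dil ((2:ℝ)^(-3:ℤ)) haarPhi) 0‖^2 = 1 := by
  rw [dil_phi_eq, Real.fourier_real_eq_integral_exp_smul]
  have : ∀ v : ℝ, Complex.exp (↑(-2 * π * v * (0:ℝ)) * Complex.I) •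
      (((8:ℝ)⁻¹ : ℂ) • (if (0:ℝ) ≤ v ∧ v < 8 then (1:ℂ) else 0))
      = ((8:ℝ)⁻¹ : ℂ) • (Complex.exp (↑(-2 * π * v * (0:ℝ)) * Complex.I)
          • (if (0:ℝ) ≤ v ∧ v < 8 then (1:ℂ) else 0)) := fun v => smul_comm _ _ _
  simp_rw [this]
  rw [integral_smul, ft_ind_zero 0 8 (by norm_num)]
  norm_num

lemma psi_norm_zero (lam m : ℝ) (hlam : 0 < lam) (hm : lam * m = 1/2) :
    ‖𝓕 (dil lam haarPsi) 0‖^2 = 0 := by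
  have hmpos : 0 < m := by nlinarith
  rw [dil_psi_eq lam m hlam hm, Real.fourier_real_eq_integral_exp_smul]
  have : ∀ v : ℝ, Complex.exp (↑(-2 * π * v * (0:ℝ)) * Complex.I) •
      (((lam:ℝ) : ℂ) • ((if (0:ℝ) ≤ v ∧ v < m then (1:ℂ) else 0)
          - (if m ≤ v ∧ v < 2*m then (1:ℂ) else 0)))
      = ((lam:ℝ) : ℂ) • ((Complex.exp (↑(-2 * π * v * (0:ℝ)) * Complex.I)
            • (if (0:ℝ) ≤ v ∧ v < m then (1:ℂ) else 0))
          - (Complex.exp (↑(-2 * π * v * (0:ℝ)) * Complex.I)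
            • (if m ≤ v ∧ v < 2*m then (1:ℂ) else 0))) := by
    intro v
    simp only [smul_eq_mul]
    ring
  simp_rw [this]
  rw [integral_smul, integral_sub (integrable_exp_smul_ind 0 m 0)
      (integrable_exp_smul_ind m (2*m) 0),
      ft_ind_zero 0 m hmpos.le, ft_ind_zero m (2*m) (by linarith)]
  have hz : (((m - 0 : ℝ)) : ℂ) - (((2*m - m : ℝ)) : ℂ) = 0 := by push_cast; ring
  rw [hz, smul_zero]
  simp

lemma key_ineq (ω : ℝ) (hω : ω ≠ 0) :
    _root_.sinc (8*ω)^2 + _root_.sinc (ω/2)^2 * Real.sin (π*ω/2)^2 + _root_.sinc ω^2 * Real.sin (π*ω)^2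
      + _root_.sinc (2*ω)^2 * Real.sin (2*π*ω)^2 ≤ 1 := by
  set a := π*ω/2 with ha
  have haa : a ≠ 0 := by
    rw [ha]; exact div_ne_zero (mul_ne_zero Real.pi_ne_zero hω) two_ne_zero
  simp only [_root_.sinc]
  rw [if_neg (mul_ne_zero (by norm_num : (8:ℝ) ≠ 0) hω),
      if_neg (div_ne_zero hω two_ne_zero), if_neg hω,
      if_neg (mul_ne_zero two_ne_zero hω)]
  rw [show π*(8*ω) = 16*a by rw [ha]; ring,
      show π*ω = 2*a by rw [ha]; ring,
      show π*(2*ω) = 4*a by rw [ha]; ring,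
      show 2*π*ω = 4*a by rw [ha]; ring,
      show π*(ω/2) = a by rw [ha]; ring]
  have e2 : Real.sin (2*a) = 2*Real.sin a*Real.cos a := Real.sin_two_mul a
  have e4 : Real.sin (4*a) = 2*Real.sin (2*a)*Real.cos (2*a) := by
    rw [show (4:ℝ)*a = 2*(2*a) by ring]; exact Real.sin_two_mul _
  have e8 : Real.sin (8*a) = 2*Real.sin (4*a)*Real.cos (4*a) := by
    rw [show (8:ℝ)*a = 2*(4*a) by ring]; exact Real.sin_two_mul _
  have e16 : Real.sin (16*a) = 2*Real.sin (8*a)*Real.cos (8*a) := by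
    rw [show (16:ℝ)*a = 2*(8*a) by ring]; exact Real.sin_two_mul _
  have p1 := Real.sin_sq_add_cos_sq a
  have p2 := Real.sin_sq_add_cos_sq (2*a)
  have p4 := Real.sin_sq_add_cos_sq (4*a)
  have p8 := Real.sin_sq_add_cos_sq (8*a)
  have hs : Real.sin a ^ 2 ≤ a^2 := Real.sin_sq_le_sq
  have e16' : Real.sin (16*a)^2 = 4*Real.sin (8*a)^2*Real.cos (8*a)^2 := by
    rw [e16]; ring
  have h16 : Real.sin (16*a)^2 ≤ 4*Real.sin (8*a)^2 := by
    nlinarith [e16', p8, sq_nonneg (Real.sin (8*a) * Real.sin (8*a))]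
  have h8' : Real.sin (8*a)^2 + 4*Real.sin (4*a)^4 = 4*Real.sin (4*a)^2 := by
    linear_combination (Real.sin (8*a) + 2*Real.sin (4*a)*Real.cos (4*a)) * e8
      + 4*Real.sin (4*a)^2 * p4
  have h4' : Real.sin (4*a)^2 + 4*Real.sin (2*a)^4 = 4*Real.sin (2*a)^2 := by
    linear_combination (Real.sin (4*a) + 2*Real.sin (2*a)*Real.cos (2*a)) * e4
      + 4*Real.sin (2*a)^2 * p2
  have h2' : Real.sin (2*a)^2 + 4*Real.sin a^4 = 4*Real.sin a^2 := by
    linear_combination (Real.sin (2*a) + 2*Real.sin a*Real.cos a) * e2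
      + 4*Real.sin a^2 * p1
  have key : Real.sin (16*a)^2/256 + Real.sin a^4 + Real.sin (2*a)^4/4
      + Real.sin (4*a)^4/16 ≤ a^2 := by linarith
  have ha2 : (0:ℝ) < a^2 := by positivity
  have hrw : (Real.sin (16*a)/(16*a))^2 + (Real.sin a/a)^2*Real.sin a^2
      + (Real.sin (2*a)/(2*a))^2*Real.sin (2*a)^2
      + (Real.sin (4*a)/(4*a))^2*Real.sin (4*a)^2
      = (Real.sin (16*a)^2/256 + Real.sin a^4 + Real.sin (2*a)^4/4
          + Real.sin (4*a)^4/16)/a^2 := by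
    field_simp
    ring
  rw [hrw, div_le_one ha2]
  exact key


/-- Littlewood–Paley type identity and bound for the Haar system (Section 4.1). -/
theorem stmt_11 (ω : ℝ) :
    ‖𝓕 (dil ((2 : ℝ) ^ (-3 : ℤ)) haarPhi) ω‖ ^ 2
        + ‖𝓕 (dil ((2 : ℝ) ^ (-2 : ℤ)) haarPsi) ω‖ ^ 2
        + ‖𝓕 (dil ((2 : ℝ) ^ (-1 : ℤ)) haarPsi) ω‖ ^ 2
        + ‖𝓕 (dil ((2 : ℝ) ^ (0 : ℤ)) haarPsi) ω‖ ^ 2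
      = _root_.sinc (8 * ω) ^ 2 + _root_.sinc (ω / 2) ^ 2 * Real.sin (π * ω / 2) ^ 2
          + _root_.sinc ω ^ 2 * Real.sin (π * ω) ^ 2
          + _root_.sinc (2 * ω) ^ 2 * Real.sin (2 * π * ω) ^ 2 ∧
    ‖𝓕 (dil ((2 : ℝ) ^ (-3 : ℤ)) haarPhi) ω‖ ^ 2
        + ‖𝓕 (dil ((2 : ℝ) ^ (-2 : ℤ)) haarPsi) ω‖ ^ 2
        + ‖𝓕 (dil ((2 : ℝ) ^ (-1 : ℤ)) haarPsi) ω‖ ^ 2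
        + ‖𝓕 (dil ((2 : ℝ) ^ (0 : ℤ)) haarPsi) ω‖ ^ 2 ≤ 1 := by
  rcases eq_or_ne ω 0 with rfl | hω
  · have hq : ‖𝓕 (dil ((2:ℝ)^(-2:ℤ)) haarPsi) 0‖^2 = 0 := by
      rw [show ((2:ℝ)^(-2:ℤ)) = 1/4 by norm_num]
      exact psi_norm_zero (1/4) 2 (by norm_num) (by norm_num)
    have hh : ‖𝓕 (dil ((2:ℝ)^(-1:ℤ)) haarPsi) 0‖^2 = 0 := by
      rw [show ((2:ℝ)^(-1:ℤ)) = 1/2 by norm_num]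
      exact psi_norm_zero (1/2) 1 (by norm_num) (by norm_num)
    have h1 : ‖𝓕 (dil ((2:ℝ)^(0:ℤ)) haarPsi) 0‖^2 = 0 := by
      rw [show ((2:ℝ)^(0:ℤ)) = 1 by norm_num]
      exact psi_norm_zero 1 (1/2) (by norm_num) (by norm_num)
    rw [phi_norm_zero, hq, hh, h1]
    norm_num [_root_.sinc]
  · have heq : ‖𝓕 (dil ((2 : ℝ) ^ (-3 : ℤ)) haarPhi) ω‖ ^ 2
        + ‖𝓕 (dil ((2 : ℝ) ^ (-2 : ℤ)) haarPsi) ω‖ ^ 2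
        + ‖𝓕 (dil ((2 : ℝ) ^ (-1 : ℤ)) haarPsi) ω‖ ^ 2
        + ‖𝓕 (dil ((2 : ℝ) ^ (0 : ℤ)) haarPsi) ω‖ ^ 2
      = _root_.sinc (8 * ω) ^ 2 + _root_.sinc (ω / 2) ^ 2 * Real.sin (π * ω / 2) ^ 2
          + _root_.sinc ω ^ 2 * Real.sin (π * ω) ^ 2
          + _root_.sinc (2 * ω) ^ 2 * Real.sin (2 * π * ω) ^ 2 := by
      rw [phi_norm ω hω, psi_norm_quarter ω hω, psi_norm_half ω hω, psi_norm_1 ω hω]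
      ring
    refine ⟨heq, ?_⟩
    rw [heq]
    have := key_ineq ω hω
    linarith

end
end
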